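/- With the map $f$ of Appendix A, let $Y = (1/2,1]$, let $\tau(x) = \inf\{k \ge 1 : f^k(x) \in Y\}$ be the first return time, and let $m$ be Lebesgue measure. Then $m(\tau \ge n) = z_{n-1}(1)/2$, and consequently there exist $\eta_1, \eta_2 > 0$ with $e^{-\eta_2 n^{\gamma}} \le m(\tau \ge n) \le e^{-\eta_1 n^{\gamma}}$ for all $n \ge 1$. -/

import Mathlib

open Set Real MeasureTheory

lemma aux_bern_lower {x y p : ℝ} (hx : 0 < x) (hxy : x ≤ y) (hp : 1 ≤ p) :
    p * x ^ (p - 1) * (y - x) ≤ y ^ p - x ^ p := by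
  have hs : (-1 : ℝ) ≤ (y - x) / x := by
    have : (0:ℝ) ≤ (y - x)/x := div_nonneg (by linarith) hx.le
    linarith
  have h := one_add_mul_self_le_rpow_one_add hs hp
  have hyx : (1 + (y - x)/x) = y / x := by field_simp; ring
  rw [hyx] at h
  have hy : 0 < y := lt_of_lt_of_le hx hxy
  rw [Real.div_rpow hy.le hx.le] at h
  have hxp : (0:ℝ) < x ^ p := rpow_pos_of_pos hx p
  have h2 : (1 + p * ((y - x)/x)) * x ^ p ≤ y ^ p := by
    calc (1 + p * ((y - x)/x)) * x ^ p ≤ (y ^ p / x ^ p) * x ^ p :=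
          mul_le_mul_of_nonneg_right h hxp.le
      _ = y ^ p := by field_simp
  have hxp1 : x ^ (p - 1) * x = x ^ p := by
    nth_rewrite 2 [← Real.rpow_one x]
    rw [← Real.rpow_add hx]; ring_nf
  have key : (1 + p*((y-x)/x)) * x^p = x^p + p*x^(p-1)*(y-x) := by
    rw [← hxp1]; field_simp
  linarith [h2, key]

lemma aux_bern_upper {x y p : ℝ} (hx : 0 < x) (hxy : x ≤ y) (hp : 1 ≤ p) :
    y ^ p - x ^ p ≤ p * y ^ (p - 1) * (y - x) := by
  have hy : 0 < y := lt_of_lt_of_le hx hxy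
  have hs : (-1 : ℝ) ≤ (x - y) / y := by
    rw [le_div_iff₀ hy]; linarith
  have h := one_add_mul_self_le_rpow_one_add hs hp
  have hyx : (1 + (x - y)/y) = x / y := by field_simp; ring
  rw [hyx, Real.div_rpow hx.le hy.le] at h
  have hyp : (0:ℝ) < y ^ p := rpow_pos_of_pos hy p
  have h2 : (1 + p * ((x - y)/y)) * y ^ p ≤ x ^ p := by
    calc (1 + p * ((x - y)/y)) * y ^ p ≤ (x ^ p / y ^ p) * y ^ p :=
          mul_le_mul_of_nonneg_right h hyp.le
      _ = x ^ p := by field_simp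
  have hyp1 : y ^ (p - 1) * y = y ^ p := by
    nth_rewrite 2 [← Real.rpow_one y]
    rw [← Real.rpow_add hy]; ring_nf
  have key : (1 + p*((x-y)/y)) * y^p = y^p + p*y^(p-1)*(x-y) := by
    rw [← hyp1]; field_simp
  linarith [h2, key]

lemma aux_log_lb {t : ℝ} (h0 : 0 ≤ t) (h1 : t ≤ 1) : t * Real.log 2 ≤ Real.log (1 + t) := by
  have h2 : Real.exp (t * Real.log 2) ≤ 1 + t := by
    have hconv := convexOn_exp.2 (Set.mem_univ (0:ℝ)) (Set.mem_univ (Real.log 2))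
      (by linarith : (0:ℝ) ≤ 1 - t) h0 (by ring)
    simp only [smul_eq_mul, mul_zero, zero_add, Real.exp_zero, Real.exp_log two_pos] at hconv
    calc Real.exp (t * Real.log 2) ≤ (1-t) * 1 + t * 2 := hconv
      _ = 1 + t := by ring
  calc t * Real.log 2 = Real.log (Real.exp (t * Real.log 2)) := (Real.log_exp _).symm
    _ ≤ Real.log (1 + t) := Real.log_le_log (Real.exp_pos _) h2

set_option maxHeartbeats 1000000 in
theorem lsv_return_time_tails (γ : ℝ) (hγ : γ ∈ Set.Ioc (0:ℝ) 1)
    (β c : ℝ) (hβ : β = γ⁻¹ - 1) (hc : c = (Real.log 2) ^ β)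
    (f g : ℝ → ℝ)
    (hf1 : ∀ x ∈ Set.Ioc (0:ℝ) (1/2), f x = x * (1 + c / |Real.log x| ^ β))
    (hf0 : f 0 = 0)
    (hf2 : ∀ x ∈ Set.Ioc (1/2 : ℝ) 1, f x = 2 * x - 1)
    (hg_mem : ∀ x ∈ Set.Ioc (0:ℝ) 1, g x ∈ Set.Ioc (0:ℝ) (1/2))
    (hg_inv : ∀ x ∈ Set.Ioc (0:ℝ) 1, f (g x) = x)
    (z : ℕ → ℝ → ℝ) (hz : ∀ n x, z n x = g^[n] x)
    (τ : ℝ → ℕ)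
    (hτ : ∀ x ∈ Set.Ioc (1/2 : ℝ) 1,
      τ x = sInf {k : ℕ | 1 ≤ k ∧ f^[k] x ∈ Set.Ioc (1/2 : ℝ) 1}) :
    (∀ n : ℕ, 1 ≤ n →
      (volume {x ∈ Set.Ioc (1/2 : ℝ) 1 | n ≤ τ x}).toReal = z (n - 1) 1 / 2) ∧
    ∃ η₁ > 0, ∃ η₂ > 0, ∀ n : ℕ, 1 ≤ n →
      Real.exp (-η₂ * (n : ℝ) ^ γ) ≤
        (volume {x ∈ Set.Ioc (1/2 : ℝ) 1 | n ≤ τ x}).toReal ∧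
      (volume {x ∈ Set.Ioc (1/2 : ℝ) 1 | n ≤ τ x}).toReal ≤
        Real.exp (-η₁ * (n : ℝ) ^ γ) := by
  obtain ⟨hγ0, hγ1⟩ := hγ
  have hL0 : 0 < Real.log 2 := Real.log_pos one_lt_two
  set L : ℝ := Real.log 2 with hLdef
  have hβ0 : 0 ≤ β := by
    rw [hβ]
    nlinarith [mul_inv_cancel₀ (ne_of_gt hγ0), inv_pos.mpr hγ0]
  have hc0 : 0 < c := by rw [hc]; exact rpow_pos_of_pos hL0 β
  -- the formula with -log
  have hfval : ∀ x ∈ Set.Ioc (0:ℝ) (1/2), f x = x * (1 + c / (-Real.log x) ^ β) := by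
    intro x hx
    have hlog : Real.log x < 0 := Real.log_neg hx.1 (by linarith [hx.2])
    rw [hf1 x hx, abs_of_neg hlog]
  have hfgt : ∀ x ∈ Set.Ioc (0:ℝ) (1/2), x < f x := by
    intro x hx
    have hlog : Real.log x < 0 := Real.log_neg hx.1 (by linarith [hx.2])
    have hpos : 0 < c / (-Real.log x) ^ β :=
      div_pos hc0 (rpow_pos_of_pos (by linarith) β)
    rw [hfval x hx]
    nlinarith [hx.1]
  have hfmono : ∀ x ∈ Set.Ioc (0:ℝ) (1/2), ∀ y ∈ Set.Ioc (0:ℝ) (1/2), x < y → f x < f y := by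
    intro x hx y hy hxy
    have hlx : Real.log x < 0 := Real.log_neg hx.1 (by linarith [hx.2])
    have hly : Real.log y < 0 := Real.log_neg hy.1 (by linarith [hy.2])
    have hlog : Real.log x ≤ Real.log y := Real.log_le_log hx.1 hxy.le
    have hr : (-Real.log y) ^ β ≤ (-Real.log x) ^ β :=
      Real.rpow_le_rpow (by linarith) (by linarith) hβ0
    have hd : c / (-Real.log x) ^ β ≤ c / (-Real.log y) ^ β :=
      div_le_div_of_nonneg_left hc0.le (rpow_pos_of_pos (by linarith) β) hr
    rw [hfval x hx, hfval y hy]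
    have h1 : 0 < 1 + c / (-Real.log x) ^ β := by
      have : 0 < c / (-Real.log x) ^ β := div_pos hc0 (rpow_pos_of_pos (by linarith) β)
      linarith
    nlinarith [hx.1]
  have hfmono_le : ∀ x ∈ Set.Ioc (0:ℝ) (1/2), ∀ y ∈ Set.Ioc (0:ℝ) (1/2), x ≤ y → f x ≤ f y := by
    intro x hx y hy hxy
    rcases eq_or_lt_of_le hxy with rfl | h
    · exact le_refl _
    · exact (hfmono x hx y hy h).le
  have hfhalf : f (1/2 : ℝ) = 1 := by
    have hmem : (1/2:ℝ) ∈ Set.Ioc (0:ℝ) (1/2) := ⟨by norm_num, le_refl _⟩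
    rw [hfval _ hmem]
    have : Real.log (1/2 : ℝ) = -L := by
      rw [hLdef]; rw [one_div, Real.log_inv]
    rw [this, neg_neg, hc]
    have : (L:ℝ) ^ β / L ^ β = 1 := div_self (ne_of_gt (rpow_pos_of_pos hL0 β))
    rw [this]; norm_num
  have hfle1 : ∀ x ∈ Set.Ioc (0:ℝ) (1/2), f x ≤ 1 := by
    intro x hx
    calc f x ≤ f (1/2) := hfmono_le x hx (1/2) ⟨by norm_num, le_refl _⟩ hx.2
      _ = 1 := hfhalf
  -- the sequence a
  set a : ℕ → ℝ := fun n => g^[n] (1:ℝ) with hadef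
  have ha0 : a 0 = 1 := rfl
  have haSucc : ∀ n, a (n+1) = g (a n) := by
    intro n; simp only [hadef, Function.iterate_succ_apply']
  have amem : ∀ n, a n ∈ Set.Ioc (0:ℝ) 1 := by
    intro n; induction n with
    | zero => rw [ha0]; exact ⟨by norm_num, le_refl _⟩
    | succ n ih =>
        rw [haSucc]
        have := hg_mem (a n) ih
        exact ⟨this.1, this.2.trans (by norm_num)⟩
  have adom : ∀ n, a (n+1) ∈ Set.Ioc (0:ℝ) (1/2) := by
    intro n; rw [haSucc]; exact hg_mem (a n) (amem n)
  have hfa : ∀ n, f (a (n+1)) = a n := by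
    intro n; rw [haSucc]; exact hg_inv (a n) (amem n)
  have ha1 : a 1 = 1/2 := by
    rcases lt_trichotomy (a 1) (1/2 : ℝ) with h | h | h
    · exfalso
      have := hfmono (a 1) (adom 0) (1/2) ⟨by norm_num, le_refl _⟩ h
      rw [hfa 0, ha0, hfhalf] at this
      exact lt_irrefl _ this
    · exact h
    · exact absurd (adom 0).2 (not_le.mpr h)
  have hadec : ∀ n, a (n+1) < a n := by
    intro n
    have := hfgt (a (n+1)) (adom n)
    rwa [hfa n] at this
  have haanti : ∀ m n, m ≤ n → a n ≤ a m := fun m n h =>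
    (antitone_nat_of_succ_le (fun k => (hadec k).le)) h
  have ahalf : ∀ n, a (n+1) ≤ 1/2 := fun n => (adom n).2
  -- Lemma A: staying low
  have stay : ∀ j m (w:ℝ), j ≤ m → 0 < w → w ≤ a m → 0 < f^[j] w ∧ f^[j] w ≤ a (m - j) := by
    intro j
    induction j with
    | zero => intro m w _ hw1 hw2; simpa using ⟨hw1, hw2⟩
    | succ j ih =>
        intro m w hjm hw1 hw2
        obtain ⟨h1, h2⟩ := ih m w (by omega) hw1 hw2
        have hmj : 1 ≤ m - j := by omega
        obtain ⟨k, hk⟩ : ∃ k, m - j = k + 1 := ⟨m - j - 1, by omega⟩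
        have hhalf : a (m - j) ≤ 1/2 := by rw [hk]; exact ahalf k
        have hin : f^[j] w ∈ Set.Ioc (0:ℝ) (1/2) := ⟨h1, h2.trans hhalf⟩
        have hfam : f (a (m - j)) = a (m - (j+1)) := by
          rw [hk, hfa k]; congr 1; omega
        constructor
        · rw [Function.iterate_succ_apply']
          exact lt_trans h1 (hfgt _ hin)
        · rw [Function.iterate_succ_apply']
          calc f (f^[j] w) ≤ f (a (m - j)) := by
                apply hfmono_le _ hin _ _ h2
                rw [hk]; exact adom k
            _ = a (m - (j+1)) := hfam
  -- Lemma B: hitting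
  have hit : ∀ m (w:ℝ), a (m+1) < w → w ≤ a m → f^[m] w ∈ Set.Ioc (1/2:ℝ) 1 := by
    intro m
    induction m with
    | zero =>
        intro w h1 h2
        rw [ha1] at h1; rw [ha0] at h2
        rw [Function.iterate_zero_apply]
        exact Set.mem_Ioc.mpr ⟨h1, h2⟩
    | succ m ih =>
        intro w h1 h2
        have hw : w ∈ Set.Ioc (0:ℝ) (1/2) :=
          ⟨lt_trans (adom (m+1)).1 h1, h2.trans (ahalf m)⟩
        have h3 : a (m+1) < f w := by
          have := hfmono (a (m+2)) (adom (m+1)) w hw h1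
          rwa [hfa (m+1)] at this
        have h4 : f w ≤ a m := by
          have := hfmono_le w hw (a (m+1)) (adom m) h2
          rwa [hfa m] at this
        have := ih (f w) h3 h4
        rwa [Function.iterate_succ_apply]
  -- exhaustion: a m → below any positive y
  have exhaust : ∀ y : ℝ, 0 < y → ∃ m, a m < y := by
    intro y hy
    by_contra hcon
    push_neg at hcon
    have hbdd : BddBelow (Set.range a) := ⟨0, by rintro _ ⟨n, rfl⟩; exact (amem n).1.le⟩
    have hanti : Antitone a := antitone_nat_of_succ_le (fun n => (hadec n).le)
    set l : ℝ := ⨅ n, a n with hldef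
    have htend : Filter.Tendsto a Filter.atTop (nhds l) := tendsto_atTop_ciInf hanti hbdd
    have hyl : y ≤ l := le_ciInf hcon
    have hl0 : 0 < l := lt_of_lt_of_le hy hyl
    have hl2 : l ≤ 1/2 := le_trans (ciInf_le hbdd 1) (by rw [ha1])
    set φ : ℝ → ℝ := fun x => x * (1 + c / (-Real.log x) ^ β) with hφdef
    have hcont : ContinuousAt φ l := by
      have hlog : Real.log l < 0 := Real.log_neg hl0 (by linarith)
      apply ContinuousAt.mul continuousAt_id
      apply ContinuousAt.add continuousAt_const
      apply ContinuousAt.div continuousAt_const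
      · exact ContinuousAt.rpow_const ((Real.continuousAt_log (ne_of_gt hl0)).neg) (Or.inr hβ0)
      · exact ne_of_gt (rpow_pos_of_pos (by linarith) β)
    have htend1 : Filter.Tendsto (fun n => a (n+1)) Filter.atTop (nhds l) :=
      htend.comp (Filter.tendsto_add_atTop_nat 1)
    have heq : ∀ n, a n = φ (a (n+1)) := by
      intro n
      rw [← hfa n, hfval _ (adom n)]
    have htend2 : Filter.Tendsto a Filter.atTop (nhds (φ l)) := by
      have := hcont.tendsto.comp htend1
      exact this.congr (fun n => (heq n).symm)
    have hfix : φ l = l := tendsto_nhds_unique htend2 htend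
    have hlog : Real.log l < 0 := Real.log_neg hl0 (by linarith)
    have hpos : 0 < c / (-Real.log l) ^ β := div_pos hc0 (rpow_pos_of_pos (by linarith) β)
    simp only [hφdef] at hfix
    nlinarith [mul_pos hl0 hpos]
  -- set equality
  classical
  have hset : ∀ n : ℕ, 1 ≤ n →
      {x ∈ Set.Ioc (1/2:ℝ) 1 | n ≤ τ x} = Set.Ioc (1/2:ℝ) ((1 + a (n-1))/2) := by
    intro n hn
    ext x
    simp only [Set.mem_setOf_eq, Set.mem_Ioc]
    constructor
    · rintro ⟨⟨hx1, hx2⟩, hτx⟩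
      refine ⟨hx1, ?_⟩
      by_contra hcon
      push_neg at hcon
      have hy : a (n-1) < 2*x - 1 := by linarith
      have hex : ∃ m, a m < 2*x-1 := ⟨n-1, hy⟩
      set m₀ := Nat.find hex with hm₀def
      have hm₀ : a m₀ < 2*x-1 := Nat.find_spec hex
      have hm₀le : m₀ ≤ n - 1 := Nat.find_le hy
      have hm₀1 : 1 ≤ m₀ := by
        by_contra h
        have h0 : m₀ = 0 := by omega
        rw [h0, ha0] at hm₀; linarith
      have hyle : 2*x-1 ≤ a (m₀ - 1) := by
        have := Nat.find_min hex (m := m₀ - 1) (by omega)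
        push_neg at this; exact this
      have hhit := hit (m₀ - 1) (2*x-1) (by rwa [show m₀ - 1 + 1 = m₀ by omega]) hyle
      have hfx : f x = 2*x - 1 := hf2 x ⟨hx1, hx2⟩
      have hiter : f^[m₀] x ∈ Set.Ioc (1/2:ℝ) 1 := by
        rw [show m₀ = (m₀ - 1) + 1 by omega, Function.iterate_succ_apply, hfx]
        exact hhit
      have hτle : τ x ≤ m₀ := by
        rw [hτ x ⟨hx1, hx2⟩]
        exact Nat.sInf_le ⟨hm₀1, hiter⟩
      omega
    · rintro ⟨hx1, hx2⟩
      have hx2' : x ≤ 1 := by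
        have := (amem (n-1)).2; linarith
      have hxY : x ∈ Set.Ioc (1/2:ℝ) 1 := ⟨hx1, hx2'⟩
      refine ⟨⟨hx1, hx2'⟩, ?_⟩
      have hfx : f x = 2*x - 1 := hf2 x hxY
      have hy0 : (0:ℝ) < 2*x - 1 := by linarith
      have hyle : 2*x - 1 ≤ a (n-1) := by linarith
      rw [hτ x hxY]
      apply le_csInf
      · obtain ⟨m, hm⟩ := exhaust (2*x-1) hy0
        have hex : ∃ m, a m < 2*x-1 := ⟨m, hm⟩
        have hm₀ : a (Nat.find hex) < 2*x-1 := Nat.find_spec hex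
        have hm₀1 : 1 ≤ Nat.find hex := by
          by_contra h
          have h0 : Nat.find hex = 0 := by omega
          rw [h0, ha0] at hm₀
          linarith [hyle, (amem (n-1)).2]
        have hyle' : 2*x-1 ≤ a (Nat.find hex - 1) := by
          have := Nat.find_min hex (m := Nat.find hex - 1) (by omega)
          push_neg at this; exact this
        have hhit := hit (Nat.find hex - 1) (2*x-1)
          (by rwa [show Nat.find hex - 1 + 1 = Nat.find hex by omega]) hyle'
        refine ⟨Nat.find hex, hm₀1, ?_⟩
        rw [show Nat.find hex = (Nat.find hex - 1)+1 by omega,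
          Function.iterate_succ_apply, hfx]
        exact hhit
      · rintro k ⟨hk1, hk2⟩
        by_contra hkn
        push_neg at hkn
        have hstay := stay (k-1) (n-1) (2*x-1) (by omega) hy0 hyle
        obtain ⟨j, hj⟩ : ∃ j, (n-1)-(k-1) = j + 1 := ⟨(n-1)-(k-1)-1, by omega⟩
        have hle : f^[k] x ≤ 1/2 := by
          rw [show k = (k-1)+1 by omega, Function.iterate_succ_apply, hfx]
          calc f^[k-1] (2*x-1) ≤ a ((n-1)-(k-1)) := hstay.2
            _ ≤ 1/2 := by rw [hj]; exact ahalf j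
        linarith [hk2.1]
  have hmeas : ∀ n : ℕ, 1 ≤ n →
      (volume {x ∈ Set.Ioc (1/2:ℝ) 1 | n ≤ τ x}).toReal = a (n-1) / 2 := by
    intro n hn
    rw [hset n hn, Real.volume_Ioc]
    rw [show (1 + a (n-1))/2 - 1/2 = a (n-1)/2 by ring]
    exact ENNReal.toReal_ofReal (by linarith [(amem (n-1)).1])
  -- the u sequence
  set u : ℕ → ℝ := fun n => -Real.log (a n) with hudef
  have hu0 : u 0 = 0 := by simp only [hudef, ha0, Real.log_one, neg_zero]
  have haexp : ∀ n, a n = Real.exp (-(u n)) := by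
    intro n
    simp only [hudef, neg_neg]
    exact (Real.exp_log (amem n).1).symm
  have hu1 : u 1 = L := by
    simp only [hudef, ha1, hLdef]
    rw [show (1:ℝ)/2 = 2⁻¹ by norm_num, Real.log_inv, neg_neg]
  have huL : ∀ n, L ≤ u (n+1) := by
    intro n
    have h1 := Real.log_le_log (amem (n+1)).1 (ahalf n)
    rw [show (1:ℝ)/2 = 2⁻¹ by norm_num, Real.log_inv] at h1
    simp only [hudef]
    linarith
  have hu_pos : ∀ n, 0 < u (n+1) := fun n => lt_of_lt_of_le hL0 (huL n)
  have humono : ∀ m n, m ≤ n → u m ≤ u n := by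
    intro m n h
    have h2 := Real.log_le_log (amem n).1 (haanti m n h)
    simp only [hudef]
    linarith
  -- recurrence
  have hurec : ∀ n, u (n+1) - u n = Real.log (1 + c * (u (n+1)) ^ (-β)) := by
    intro n
    have hun1 : 0 < u (n+1) := hu_pos n
    have hkey : a n = a (n+1) * (1 + c / (u (n+1)) ^ β) := by
      rw [← hfa n, hfval _ (adom n)]
    have ht0 : 0 < c / (u (n+1)) ^ β := div_pos hc0 (rpow_pos_of_pos hun1 β)
    have hlog := congrArg Real.log hkey
    rw [Real.log_mul (ne_of_gt (amem (n+1)).1) (by positivity)] at hlog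
    have hrw : c / (u (n+1)) ^ β = c * (u (n+1)) ^ (-β) := by
      rw [Real.rpow_neg hun1.le, div_eq_mul_inv]
    rw [hrw] at hlog
    simp only [hudef] at *
    linarith [hlog]
  set t : ℕ → ℝ := fun n => c * (u (n+1)) ^ (-β) with htdef
  have ht0 : ∀ n, 0 < t n := fun n => mul_pos hc0 (rpow_pos_of_pos (hu_pos n) (-β))
  have ht1 : ∀ n, t n ≤ 1 := by
    intro n
    have h1 : (u (n+1)) ^ (-β) ≤ L ^ (-β) :=
      Real.rpow_le_rpow_of_nonpos hL0 (huL n) (neg_nonpos.mpr hβ0)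
    have h2 : c * (u (n+1)) ^ (-β) ≤ L ^ β * L ^ (-β) := by
      rw [← hc]
      exact mul_le_mul_of_nonneg_left h1 hc0.le
    rw [← Real.rpow_add hL0, add_neg_cancel, Real.rpow_zero] at h2
    exact h2
  have hub : ∀ n, u (n+1) - u n ≤ t n := by
    intro n
    rw [hurec n]
    have := Real.log_le_sub_one_of_pos (show (0:ℝ) < 1 + t n by linarith [ht0 n])
    simp only [htdef] at *
    linarith
  have hlb : ∀ n, L * t n ≤ u (n+1) - u n := by
    intro n
    rw [hurec n]
    have := aux_log_lb (ht0 n).le (ht1 n)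
    simp only [htdef, hLdef] at *
    linarith
  have hstep1 : ∀ n, u (n+1) ≤ u n + 1 := by
    intro n
    have := hub n
    have := ht1 n
    linarith
  -- v sequence
  set p : ℝ := β + 1 with hpdef
  have hp1 : 1 ≤ p := by simp only [hpdef]; linarith
  have hpγ : p * γ = 1 := by
    rw [hpdef, hβ]
    field_simp; ring
  set v : ℕ → ℝ := fun n => (u n) ^ p with hvdef
  set ρ : ℝ := (L / (L+1)) ^ β with hρdef
  have hρ0 : 0 < ρ := rpow_pos_of_pos (by positivity) β
  have hvu : ∀ n, v (n+2) - v (n+1) ≤ p * c := by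
    intro n
    have hx : 0 < u (n+1) := hu_pos n
    have hxy : u (n+1) ≤ u (n+2) := humono _ _ (by omega)
    have hy : 0 < u (n+2) := lt_of_lt_of_le hx hxy
    have hb := aux_bern_upper hx hxy hp1
    have hps : p - 1 = β := by simp only [hpdef]; ring
    rw [hps] at hb
    have h2 : u (n+2) - u (n+1) ≤ c * (u (n+2)) ^ (-β) := hub (n+1)
    have h3 : p * (u (n+2)) ^ β * (u (n+2) - u (n+1)) ≤
        p * (u (n+2)) ^ β * (c * (u (n+2)) ^ (-β)) := by
      apply mul_le_mul_of_nonneg_left h2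
      positivity
    have h4 : p * (u (n+2)) ^ β * (c * (u (n+2)) ^ (-β)) = p * c := by
      have : (u (n+2)) ^ β * (u (n+2)) ^ (-β) = 1 := by
        rw [← Real.rpow_add hy, add_neg_cancel, Real.rpow_zero]
      calc p * (u (n+2)) ^ β * (c * (u (n+2)) ^ (-β))
          = p * c * ((u (n+2)) ^ β * (u (n+2)) ^ (-β)) := by ring
        _ = p * c := by rw [this]; ring
    simp only [hvdef]
    linarith
  have hvl : ∀ n, p * L * c * ρ ≤ v (n+2) - v (n+1) := by
    intro n
    have hx : 0 < u (n+1) := hu_pos n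
    have hxy : u (n+1) ≤ u (n+2) := humono _ _ (by omega)
    have hy : 0 < u (n+2) := lt_of_lt_of_le hx hxy
    have hb := aux_bern_lower hx hxy hp1
    have hps : p - 1 = β := by simp only [hpdef]; ring
    rw [hps] at hb
    have h2 : L * (c * (u (n+2)) ^ (-β)) ≤ u (n+2) - u (n+1) := hlb (n+1)
    have h3 : p * (u (n+1)) ^ β * (L * (c * (u (n+2)) ^ (-β))) ≤
        p * (u (n+1)) ^ β * (u (n+2) - u (n+1)) := by
      apply mul_le_mul_of_nonneg_left h2
      positivity
    -- ratio bound
    have hyx : u (n+2) * L ≤ u (n+1) * (L+1) := by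
      nlinarith [hstep1 (n+1), huL n, hL0]
    have hratio : L / (L+1) ≤ u (n+1) / u (n+2) := by
      rw [div_le_div_iff₀ (by positivity) hy]
      linarith [hyx]
    have hrpowratio : ρ ≤ (u (n+1) / u (n+2)) ^ β := by
      simp only [hρdef]
      exact Real.rpow_le_rpow (by positivity) hratio hβ0
    have hprod : (u (n+1)) ^ β * (u (n+2)) ^ (-β) = (u (n+1) / u (n+2)) ^ β := by
      rw [Real.div_rpow hx.le hy.le, Real.rpow_neg hy.le, div_eq_mul_inv]
    have h8 : p * L * c * ρ ≤ p * L * c * ((u (n+1)) ^ β * (u (n+2)) ^ (-β)) := by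
      rw [hprod]
      apply mul_le_mul_of_nonneg_left hrpowratio
      positivity
    have h9 : p * (u (n+1)) ^ β * (L * (c * (u (n+2)) ^ (-β))) =
        p * L * c * ((u (n+1)) ^ β * (u (n+2)) ^ (-β)) := by ring
    simp only [hvdef]
    linarith [hb, h3]
  -- linear bounds on v
  set K₁ : ℝ := min (L ^ p) (p * L * c * ρ) with hK₁def
  set K₂ : ℝ := max (L ^ p) (p * c) with hK₂def
  have hK₁0 : 0 < K₁ := lt_min (rpow_pos_of_pos hL0 p) (by positivity)
  have hK₂0 : 0 < K₂ := lt_of_lt_of_le (rpow_pos_of_pos hL0 p) (le_max_left _ _)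
  have hv1 : v 1 = L ^ p := by simp only [hvdef, hu1]
  have hvbound : ∀ n, 1 ≤ n → K₁ * n ≤ v n ∧ v n ≤ K₂ * n := by
    intro n hn
    induction n with
    | zero => omega
    | succ n ih =>
        rcases Nat.eq_or_lt_of_le hn with h1 | h1
        · rw [← h1]
          push_cast
          rw [hv1]
          constructor
          · simp only [Nat.cast_one, mul_one]
            exact min_le_left _ _
          · simp only [Nat.cast_one, mul_one]
            exact le_max_left _ _
        · have hn1 : 1 ≤ n := by omega
          obtain ⟨hl', hu'⟩ := ih hn1
          obtain ⟨m, hm⟩ : ∃ m, n = m + 1 := ⟨n - 1, by omega⟩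
          have hstep_l : p * L * c * ρ ≤ v (n+1) - v n := by rw [hm]; exact hvl m
          have hstep_u : v (n+1) - v n ≤ p * c := by rw [hm]; exact hvu m
          have hK₁le : K₁ ≤ p * L * c * ρ := min_le_right _ _
          have hK₂le : p * c ≤ K₂ := le_max_right _ _
          constructor
          · push_cast
            push_cast at hl'
            linarith
          · push_cast
            push_cast at hu'
            linarith
  -- bounds on u
  have huv : ∀ n, 1 ≤ n → u n = (v n) ^ γ := by
    intro n hn
    have h0 : 0 ≤ u n := le_trans hL0.le (by
      obtain ⟨m, hm⟩ : ∃ m, n = m + 1 := ⟨n - 1, by omega⟩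
      rw [hm]; exact huL m)
    simp only [hvdef]
    rw [← Real.rpow_mul h0, hpγ, Real.rpow_one]
  have hu_lo : ∀ n : ℕ, 1 ≤ n → K₁ ^ γ * (n:ℝ) ^ γ ≤ u n := by
    intro n hn
    rw [huv n hn, ← Real.mul_rpow hK₁0.le (by positivity)]
    exact Real.rpow_le_rpow (by positivity) (hvbound n hn).1 hγ0.le
  have hu_hi : ∀ n : ℕ, 1 ≤ n → u n ≤ K₂ ^ γ * (n:ℝ) ^ γ := by
    intro n hn
    rw [huv n hn, ← Real.mul_rpow hK₂0.le (by positivity)]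
    apply Real.rpow_le_rpow _ (hvbound n hn).2 hγ0.le
    have := hu_pos
    obtain ⟨m, hm⟩ : ∃ m, n = m + 1 := ⟨n - 1, by omega⟩
    have h0 : 0 ≤ u n := by rw [hm]; exact (hu_pos m).le
    simp only [hvdef]
    positivity
  -- conclusion
  have hexpL : Real.exp (-L) = 1/2 := by
    rw [hLdef, Real.exp_neg, Real.exp_log two_pos]
    norm_num
  refine ⟨?_, ?_⟩
  · intro n hn
    rw [hmeas n hn, hz]
  · refine ⟨min L (K₁ ^ γ / 2 ^ γ), lt_min hL0 (by positivity), K₂ ^ γ + L, by positivity, ?_⟩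
    intro n hn
    rw [hmeas n hn]
    have hval : a (n-1) / 2 = Real.exp (-(u (n-1) + L)) := by
      rw [haexp (n-1), show -(u (n-1) + L) = -(u (n-1)) + -L by ring, Real.exp_add, hexpL]
      ring
    have hn1 : (1:ℝ) ≤ (n:ℝ) := by exact_mod_cast hn
    have hnγ1 : (1:ℝ) ≤ (n:ℝ) ^ γ := by
      rw [← Real.one_rpow γ]
      exact Real.rpow_le_rpow zero_le_one hn1 hγ0.le
    constructor
    · -- lower bound
      rw [hval, Real.exp_le_exp]
      have hupper : u (n-1) ≤ K₂ ^ γ * (n:ℝ) ^ γ := by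
        rcases Nat.eq_or_lt_of_le hn with h1 | h1
        · rw [← h1, show (1-1 : ℕ) = 0 from rfl, hu0]
          positivity
        · have h2 : 1 ≤ n - 1 := by omega
          calc u (n-1) ≤ K₂ ^ γ * ((n-1:ℕ):ℝ) ^ γ := hu_hi (n-1) h2
            _ ≤ K₂ ^ γ * (n:ℝ) ^ γ := by
                apply mul_le_mul_of_nonneg_left _ (by positivity)
                apply Real.rpow_le_rpow (by positivity) _ hγ0.le
                exact_mod_cast Nat.sub_le n 1
      have hL' : L ≤ L * (n:ℝ) ^ γ := le_mul_of_one_le_right hL0.le hnγ1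
      have hexpand : (K₂ ^ γ + L) * (n:ℝ) ^ γ = K₂ ^ γ * (n:ℝ) ^ γ + L * (n:ℝ) ^ γ := by
        ring
      linarith
    · -- upper bound
      rw [hval, Real.exp_le_exp]
      rcases Nat.eq_or_lt_of_le hn with h1 | h1
      · rw [← h1, show (1-1 : ℕ) = 0 from rfl, hu0]
        have hm := min_le_left L (K₁ ^ γ / 2 ^ γ)
        have h2 : ((1:ℕ):ℝ) ^ γ = 1 := by
          rw [Nat.cast_one, Real.one_rpow]
        rw [h2]
        linarith
      · have h2 : 1 ≤ n - 1 := by omega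
        have hcast : ((n-1:ℕ):ℝ) = (n:ℝ) - 1 := by
          push_cast [hn]
          ring
        have hlow := hu_lo (n-1) h2
        rw [hcast] at hlow
        have hdiv : (n:ℝ)/2 ≤ (n:ℝ) - 1 := by
          have : (2:ℝ) ≤ (n:ℝ) := by exact_mod_cast h1
          linarith
        have hstep2 : K₁ ^ γ * ((n:ℝ)/2) ^ γ ≤ K₁ ^ γ * ((n:ℝ)-1) ^ γ := by
          apply mul_le_mul_of_nonneg_left _ (by positivity)
          exact Real.rpow_le_rpow (by positivity) hdiv hγ0.le
        have heq : K₁ ^ γ * ((n:ℝ)/2) ^ γ = (K₁ ^ γ / 2 ^ γ) * (n:ℝ) ^ γ := by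
          rw [Real.div_rpow (by positivity) (by norm_num : (0:ℝ) ≤ 2)]
          ring
        have hmin : min L (K₁ ^ γ / 2 ^ γ) ≤ K₁ ^ γ / 2 ^ γ := min_le_right _ _
        have hη' : min L (K₁^γ/2^γ) * (n:ℝ)^γ ≤ (K₁^γ/2^γ) * (n:ℝ)^γ :=
          mul_le_mul_of_nonneg_right hmin (Real.rpow_nonneg n.cast_nonneg γ)
        have hfin : (min L (K₁^γ/2^γ)) * (n:ℝ)^γ ≤ u (n-1) + L := by
          calc (min L (K₁^γ/2^γ)) * (n:ℝ)^γ ≤ (K₁^γ/2^γ) * (n:ℝ)^γ := hη'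
            _ = K₁^γ * ((n:ℝ)/2)^γ := heq.symm
            _ ≤ K₁^γ * ((n:ℝ)-1)^γ := hstep2
            _ ≤ u (n-1) := hlow
            _ ≤ u (n-1) + L := by linarith
        linarith [hfin]
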